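/- arXiv:1211.5893 — 3 statements merged into one kernel-verified Lean document; each statement's English description precedes it below -/
import Mathlib

section
/- Stokes' theorem for a simplex: if f = [x_0,…,x_{k+1}] is a (k+1)-dimensional oriented affine simplex and u is a smooth k-form on a neighborhood of f, then ∫_f du = Σ_{j=0}^{k+1} (-1)^j ∫_{f_j} tr_{f_j} u, where f_j is the facet of f obtained by deleting vertex x_j. -/
open MeasureTheory

/-- The "corner" reference simplex `{t : t_i ≥ 0, ∑ t_i ≤ 1}` in `ℝ^m`, used to
parametrize affine simplices. -/
def cornerSimplex (m : ℕ) : Set (EuclideanSpace ℝ (Fin m)) :=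
  {t | (∀ i, 0 ≤ t i) ∧ ∑ i, t i ≤ 1}

/-- Pointwise evaluation of the exterior derivative of a `k`-form `u` on constant
vectors: `(du)(x)(v_0,…,v_k) = ∑_i (-1)^i ∂_{v_i}(u(·)(v ∘ succAbove i))(x)`. -/
noncomputable def extDerivEval {n k : ℕ}
    (u : EuclideanSpace ℝ (Fin n) → (Fin k → EuclideanSpace ℝ (Fin n)) → ℝ)
    (x : EuclideanSpace ℝ (Fin n)) (v : Fin (k + 1) → EuclideanSpace ℝ (Fin n)) : ℝ :=
  ∑ i : Fin (k + 1), (-1 : ℝ) ^ (i : ℕ) *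
    fderiv ℝ (fun y => u y (v ∘ i.succAbove)) x (v i)

namespace StokesAux


def pic (m : ℕ) : Set (Fin m → ℝ) := {t | (∀ i, 0 ≤ t i) ∧ ∑ i, t i ≤ 1}

lemma isClosed_pic (m : ℕ) : IsClosed (pic m) := by
  have h1 : IsClosed {t : Fin m → ℝ | ∀ i, 0 ≤ t i} := by
    have : {t : Fin m → ℝ | ∀ i, 0 ≤ t i} = ⋂ i, {t | 0 ≤ t i} := by ext t; simp
    rw [this]
    exact isClosed_iInter fun i => isClosed_le continuous_const (continuous_apply i)
  have h2 : IsClosed {t : Fin m → ℝ | ∑ i, t i ≤ 1} :=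
    isClosed_le (by continuity) continuous_const
  exact h1.inter h2

lemma measurableSet_pic (m : ℕ) : MeasurableSet (pic m) := (isClosed_pic m).measurableSet

lemma isCompact_pic (m : ℕ) : IsCompact (pic m) := by
  refine (isCompact_univ_pi fun _ : Fin m => isCompact_Icc (a := (0:ℝ)) (b := 1)).of_isClosed_subset
    (isClosed_pic m) ?_
  intro t ht
  have h := ht.1
  intro i _
  refine ⟨h i, ?_⟩
  calc t i ≤ ∑ j, t j := Finset.single_le_sum (fun j _ => h j) (Finset.mem_univ i)
    _ ≤ 1 := ht.2

lemma volume_pic_lt_top (m : ℕ) : volume (pic m) < ⊤ := (isCompact_pic m).measure_lt_top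

lemma volume_pic_pos (m : ℕ) : 0 < volume (pic m) := by
  have hsub : (Set.univ.pi fun _ : Fin m => Set.Ioo (0:ℝ) ((m+1:ℝ)⁻¹)) ⊆ pic m := by
    intro t ht
    simp only [Set.mem_pi, Set.mem_univ, Set.mem_Ioo, forall_true_left] at ht
    refine ⟨fun i => (ht i).1.le, ?_⟩
    calc ∑ i, t i ≤ ∑ _i : Fin m, ((m+1:ℝ)⁻¹) := Finset.sum_le_sum fun i _ => (ht i).2.le
      _ = m * (m+1:ℝ)⁻¹ := by simp [mul_comm]
      _ ≤ 1 := by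
          rw [← le_div_iff₀ (by positivity), one_div, inv_inv]
          linarith
  refine lt_of_lt_of_le ?_ (measure_mono hsub)
  rw [volume_pi_pi]
  simp only [Real.volume_Ioo, sub_zero]
  rw [Finset.prod_const]
  positivity

lemma integral_corner_eq (m : ℕ) (f : EuclideanSpace ℝ (Fin m) → ℝ) :
    (∫ t in cornerSimplex m, f t) =
      ∫ t in pic m, f ((MeasurableEquiv.toLp 2 (Fin m → ℝ)) t) := by
  have himg : (⇑(MeasurableEquiv.toLp 2 (Fin m → ℝ)) '' pic m) = cornerSimplex m := by
    ext t
    constructor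
    · rintro ⟨s, hs, rfl⟩; exact hs
    · intro ht; exact ⟨t.ofLp, ht, rfl⟩
  rw [← himg]
  exact (MeasurePreserving.setIntegral_image_emb
    (EuclideanSpace.volume_preserving_symm_measurableEquiv_toLp (Fin m)).symm
    (MeasurableEquiv.measurableEmbedding _) f (pic m))


variable {m : ℕ}

/-- `insertNth` specialized to constant motive `ℝ`. -/
def ins (i : Fin (m+1)) (c : ℝ) (s : Fin m → ℝ) : Fin (m+1) → ℝ :=
  Fin.insertNth (α := fun _ => ℝ) i c s

@[simp] lemma ins_same (i : Fin (m+1)) (c : ℝ) (s : Fin m → ℝ) : ins i c s i = c :=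
  Fin.insertNth_apply_same (α := fun _ => ℝ) i c s

@[simp] lemma ins_succAbove (i : Fin (m+1)) (c : ℝ) (s : Fin m → ℝ) (a : Fin m) :
    ins i c s (i.succAbove a) = s a :=
  Fin.insertNth_apply_succAbove (α := fun _ => ℝ) i c s a

lemma sum_ins (i : Fin (m+1)) (c : ℝ) (s : Fin m → ℝ) :
    ∑ j, ins i c s j = c + ∑ a, s a := by
  rw [Fin.sum_univ_succAbove _ i, ins_same]
  simp

lemma ins_mem_pic {i : Fin (m+1)} {c : ℝ} {s : Fin m → ℝ} :
    ins i c s ∈ pic (m+1) ↔ ((∀ a, 0 ≤ s a) ∧ 0 ≤ c ∧ c + ∑ a, s a ≤ 1) := by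
  unfold pic
  rw [Set.mem_setOf_eq, Fin.forall_iff_succAbove i, sum_ins]
  simp only [ins_same, ins_succAbove]
  tauto

def Phi (i : Fin (m+1)) (s : Fin m → ℝ) : Fin m → ℝ :=
  fun a => ins i (1 - ∑ b, s b) s a.succ

lemma sum_Phi (i : Fin (m+1)) (s : Fin m → ℝ) :
    ∑ a, Phi i s a = 1 - ins i (1 - ∑ b, s b) s 0 := by
  have h := Fin.sum_univ_succ (ins i (1 - ∑ b, s b) s)
  rw [sum_ins] at h
  unfold Phi
  linarith

lemma zero_ins_succ (c : ℝ) (s : Fin m → ℝ) (a : Fin m) :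
    ins (0 : Fin (m+1)) c s a.succ = s a := by
  have h : a.succ = (0 : Fin (m+1)).succAbove a := by simp [Fin.succAbove_zero]
  rw [h, ins_succAbove]

lemma key_identity (i : Fin (m+1)) (s : Fin m → ℝ) :
    ins (0 : Fin (m+1)) (1 - ∑ a, Phi i s a) (Phi i s) = ins i (1 - ∑ b, s b) s := by
  funext j
  induction j using Fin.cases with
  | zero =>
    have h0 : ins (0 : Fin (m+1)) (1 - ∑ a, Phi i s a) (Phi i s) 0 = 1 - ∑ a, Phi i s a :=
      ins_same _ _ _
    rw [h0, sum_Phi]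
    ring
  | succ a =>
    rw [zero_ins_succ]
    rfl

def Psi (i : Fin (m+1)) (s' : Fin m → ℝ) : Fin m → ℝ :=
  fun a => ins (0 : Fin (m+1)) (1 - ∑ b, s' b) s' (i.succAbove a)

lemma Psi_Phi (i : Fin (m+1)) (s : Fin m → ℝ) : Psi i (Phi i s) = s := by
  funext a
  unfold Psi
  rw [key_identity, ins_succAbove]

lemma sum_Psi (i : Fin (m+1)) (s' : Fin m → ℝ) :
    ∑ a, Psi i s' a = 1 - ins (0 : Fin (m+1)) (1 - ∑ b, s' b) s' i := by
  have h := Fin.sum_univ_succAbove (ins (0 : Fin (m+1)) (1 - ∑ b, s' b) s') i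
  rw [sum_ins] at h
  unfold Psi
  linarith

lemma Phi_Psi (i : Fin (m+1)) (s' : Fin m → ℝ) : Phi i (Psi i s') = s' := by
  have hins : ins i (1 - ∑ a, Psi i s' a) (Psi i s') =
      ins (0 : Fin (m+1)) (1 - ∑ b, s' b) s' := by
    funext j
    refine Fin.succAboveCases i ?_ ?_ j
    · rw [ins_same, sum_Psi]; ring
    · intro a; rw [ins_succAbove]; rfl
  funext a
  unfold Phi
  rw [hins, zero_ins_succ]

lemma Phi_mem_pic {i : Fin (m+1)} {s : Fin m → ℝ} (hs : s ∈ pic m) : Phi i s ∈ pic m := by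
  obtain ⟨h0, h1⟩ := hs
  have ht : ∀ j, 0 ≤ ins i (1 - ∑ b, s b) s j := by
    rw [Fin.forall_iff_succAbove i]
    constructor
    · rw [ins_same]; linarith
    · intro a; rw [ins_succAbove]; exact h0 a
  constructor
  · intro a; exact ht a.succ
  · rw [sum_Phi]; linarith [ht 0]

lemma Psi_mem_pic {i : Fin (m+1)} {s' : Fin m → ℝ} (hs : s' ∈ pic m) : Psi i s' ∈ pic m := by
  obtain ⟨h0, h1⟩ := hs
  have ht : ∀ j, 0 ≤ ins (0 : Fin (m+1)) (1 - ∑ b, s' b) s' j := by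
    rw [Fin.forall_iff_succAbove (0 : Fin (m+1))]
    constructor
    · rw [ins_same]; linarith
    · intro a; rw [ins_succAbove]; exact h0 a
  constructor
  · intro a; exact ht (i.succAbove a)
  · rw [sum_Psi]; linarith [ht i]

lemma Phi_image_pic (i : Fin (m+1)) : Phi i '' pic m = pic m := by
  apply Set.Subset.antisymm
  · rintro _ ⟨s, hs, rfl⟩; exact Phi_mem_pic hs
  · intro s' hs'
    exact ⟨Psi i s', Psi_mem_pic hs', Phi_Psi i s'⟩

lemma Phi_injective (i : Fin (m+1)) : Function.Injective (Phi i) := by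
  intro a b h
  rw [← Psi_Phi i a, ← Psi_Phi i b, h]

lemma ins_add (i : Fin (m+1)) (c c' : ℝ) (s s' : Fin m → ℝ) :
    ins i (c + c') (s + s') = ins i c s + ins i c' s' := by
  funext j
  refine Fin.succAboveCases i ?_ ?_ j <;> simp

lemma ins_smul (i : Fin (m+1)) (r c : ℝ) (s : Fin m → ℝ) :
    ins i (r * c) (r • s) = r • ins i c s := by
  funext j
  refine Fin.succAboveCases i ?_ ?_ j <;> simp

def Lmap (i : Fin (m+1)) : (Fin m → ℝ) →ₗ[ℝ] (Fin m → ℝ) where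
  toFun s := fun a => ins i (-∑ b, s b) s a.succ
  map_add' s t := by
    funext a
    have h := congrFun (ins_add i (-∑ b, s b) (-∑ b, t b) s t) a.succ
    simp only [Pi.add_apply] at h ⊢
    rw [← h]
    have hsum : -∑ x : Fin m, (s x + t x) = -∑ b, s b + -∑ b, t b := by
      rw [← neg_add, Finset.sum_add_distrib]
    rw [hsum]
  map_smul' r s := by
    funext a
    have h := congrFun (ins_smul i r (-∑ b, s b) s) a.succ
    simp only [RingHom.id_apply, Pi.smul_apply, smul_eq_mul] at h ⊢
    rw [← h]
    have hsum : -∑ x : Fin m, r * s x = r * -∑ b, s b := by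
      rw [← Finset.mul_sum]; ring
    rw [hsum]

lemma Phi_eq_Lmap (i : Fin (m+1)) (s : Fin m → ℝ) :
    Phi i s = Lmap i s + Phi i 0 := by
  funext a
  simp only [Lmap, Phi, LinearMap.coe_mk, AddHom.coe_mk, Pi.add_apply, Pi.zero_apply,
    Finset.sum_const_zero, sub_zero]
  have h2 : ins i (1 - ∑ b, s b) s = ins i (-∑ b, s b + 1) (s + 0) := by
    rw [add_zero]
    congr 1
    ring
  rw [h2]
  have h3 := congrFun (ins_add i (-∑ b, s b) 1 s 0) a.succ
  simp only [Pi.add_apply] at h3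
  rw [h3]


lemma abs_det_Lmap (i : Fin (m+1)) : |LinearMap.det (Lmap i)| = 1 := by
  have h1 : ⇑(Lmap i) '' pic m = (fun v => v + (- Phi i 0)) '' pic m := by
    have hfun : ⇑(Lmap i) = (fun v => v + (- Phi i 0)) ∘ Phi i := by
      funext s
      simp only [Function.comp_apply]
      rw [Phi_eq_Lmap i s]
      abel
    rw [hfun, Set.image_comp, Phi_image_pic]
  have h2 : volume (⇑(Lmap i) '' pic m) = volume (pic m) := by
    rw [h1, Set.image_add_right, measure_preimage_add_right]
  have h3 := Measure.addHaar_image_linearMap volume (Lmap i) (pic m)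
  rw [h2] at h3
  have hv0 : (volume (pic m)).toReal ≠ 0 :=
    (ENNReal.toReal_pos (volume_pic_pos m).ne' (volume_pic_lt_top m).ne).ne'
  have h4 := congrArg ENNReal.toReal h3
  rw [ENNReal.toReal_mul, ENNReal.toReal_ofReal (abs_nonneg _)] at h4
  field_simp at h4
  linarith [h4]

lemma slant_change (i : Fin (m+1)) (H : (Fin (m+1) → ℝ) → ℝ) :
    (∫ s in pic m, H (ins i (1 - ∑ a, s a) s)) =
      ∫ s in pic m, H (ins (0 : Fin (m+1)) (1 - ∑ a, s a) s) := by
  have hPhi : Phi (m := m) i = fun s => (Lmap i).toContinuousLinearMap s + Phi i 0 := by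
    funext s; rw [Phi_eq_Lmap]; rfl
  have hder : ∀ s ∈ pic m,
      HasFDerivWithinAt (Phi i) ((Lmap i).toContinuousLinearMap) (pic m) s := by
    intro s _
    rw [hPhi]
    exact (((Lmap i).toContinuousLinearMap.hasFDerivAt).add_const _).hasFDerivWithinAt
  have hcov := integral_image_eq_integral_abs_det_fderiv_smul volume (measurableSet_pic m)
      hder ((Phi_injective i).injOn) (fun s' => H (ins (0 : Fin (m+1)) (1 - ∑ a, s' a) s'))
  rw [Phi_image_pic] at hcov
  rw [hcov]
  apply setIntegral_congr_fun (measurableSet_pic m)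
  intro s _
  have hdet : ((Lmap i).toContinuousLinearMap : (Fin m → ℝ) →L[ℝ] (Fin m → ℝ)).det
      = LinearMap.det (Lmap i) := by
    unfold ContinuousLinearMap.det
    congr 1
  simp only [hdet, abs_det_Lmap, smul_eq_mul, one_mul, key_identity]



lemma update_eq_perm {E : Type*} [AddCommGroup E] [Module ℝ E] {k : ℕ}
    (u : E [⋀^Fin (k+1)]→ₗ[ℝ] ℝ) (v : Fin (k+2) → E) (j : Fin (k+1)) :
    u (Function.update (fun a : Fin (k+1) => v a.succ) j (v 0))
      = (-1 : ℝ) ^ (j : ℕ) * u (v ∘ (j.succ).succAbove) := by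
  have h3 : Function.update (fun a : Fin (k+1) => v a.succ) j (v 0)
      = (v ∘ (j.succ).succAbove) ∘ j.cycleRange := by
    funext b
    rcases lt_trichotomy b j with hb | rfl | hb
    · rw [Function.update_of_ne hb.ne]
      simp only [Function.comp_apply, Fin.cycleRange_of_lt hb]
      have hlt : ((b + 1 : Fin (k+1))).castSucc < j.succ := by
        rw [Fin.castSucc_lt_succ_iff, Fin.le_def, Fin.val_add_one_of_lt (lt_of_lt_of_le hb (Fin.le_last j))]
        exact Nat.succ_le_of_lt hb
      rw [Fin.succAbove_of_castSucc_lt _ _ hlt]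
      congr 1
      apply Fin.ext
      rw [Fin.coe_castSucc, Fin.val_succ, Fin.val_add_one_of_lt (lt_of_lt_of_le hb (Fin.le_last j))]
    · rw [Function.update_self]
      simp only [Function.comp_apply, Fin.cycleRange_self]
      have h0lt : ((0 : Fin (k+1))).castSucc < b.succ := by
        rw [Fin.castSucc_lt_succ_iff]
        exact Fin.zero_le b
      rw [Fin.succAbove_of_castSucc_lt _ _ h0lt]
      rfl
    · rw [Function.update_of_ne hb.ne']
      simp only [Function.comp_apply, Fin.cycleRange_of_gt hb]
      have hge : j.succ ≤ b.castSucc := by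
        rw [Fin.succ_le_castSucc_iff]
        exact hb
      rw [Fin.succAbove_of_le_castSucc _ _ hge]
  rw [h3, u.map_perm, Fin.sign_cycleRange]
  rcases Nat.even_or_odd (j : ℕ) with he | ho
  · simp [he.neg_one_pow]
  · simp [ho.neg_one_pow]

lemma single_term {E : Type*} [AddCommGroup E] [Module ℝ E] {k : ℕ}
    (u : E [⋀^Fin k]→ₗ[ℝ] ℝ) (v : Fin (k+1) → E) (j : Fin k) :
    u (Function.update (fun a : Fin k => v a.succ) j (v 0))
      = (-1 : ℝ) ^ (j : ℕ) * u (v ∘ (j.succ : Fin (k+1)).succAbove) := by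
  cases k with
  | zero => exact j.elim0
  | succ k' => exact update_eq_perm u v j

lemma alt_expand {E : Type*} [AddCommGroup E] [Module ℝ E] {k : ℕ}
    (u : E [⋀^Fin k]→ₗ[ℝ] ℝ) (v : Fin (k+1) → E) :
    u (fun a => v a.succ - v 0) =
      ∑ j : Fin (k+1), (-1 : ℝ) ^ (j : ℕ) * u (v ∘ j.succAbove) := by
  classical
  set m : Fin k → E := fun a => v a.succ with hm
  set m' : Fin k → E := fun _ => -v 0 with hm'
  have h0 : (fun a => v a.succ - v 0) = m + m' := by
    funext a; simp [hm, hm', sub_eq_add_neg]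
  rw [h0]
  have hadd : u (m + m') = ∑ S : Finset (Fin k), u (S.piecewise m m') :=
    u.toMultilinearMap.map_add_univ m m'
  rw [hadd]
  have hzero : ∀ S : Finset (Fin k), 1 < Sᶜ.card → u (S.piecewise m m') = 0 := by
    intro S hS
    obtain ⟨i, hi, j, hj, hij⟩ := Finset.one_lt_card.mp hS
    refine u.map_eq_zero_of_eq _ ?_ hij
    rw [Finset.mem_compl] at hi hj
    rw [Finset.piecewise_eq_of_notMem _ _ _ hi, Finset.piecewise_eq_of_notMem _ _ _ hj]
  have hfilter : ∑ S : Finset (Fin k), u (S.piecewise m m')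
      = ∑ S ∈ Finset.univ.filter (fun S : Finset (Fin k) => Sᶜ.card ≤ 1),
          u (S.piecewise m m') := by
    symm
    apply Finset.sum_filter_of_ne
    intro S _ hne
    by_contra hcard
    exact hne (hzero S (by omega))
  rw [hfilter]
  have hset : Finset.univ.filter (fun S : Finset (Fin k) => Sᶜ.card ≤ 1)
      = insert Finset.univ
          ((Finset.univ : Finset (Fin k)).image fun j => ({j}ᶜ : Finset (Fin k))) := by
    ext S
    simp only [Finset.mem_filter, Finset.mem_univ, true_and, Finset.mem_insert,
      Finset.mem_image]
    constructor
    · intro h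
      rcases Finset.eq_empty_or_nonempty (Sᶜ) with h0 | hne
      · left
        rwa [Finset.compl_eq_empty_iff] at h0
      · right
        obtain ⟨x, hx⟩ := hne
        have hsing : Sᶜ = {x} := Finset.eq_singleton_iff_unique_mem.mpr
          ⟨hx, fun y hy => Finset.card_le_one.mp h y hy x hx⟩
        exact ⟨x, by rw [← compl_compl S, hsing]⟩
    · rintro (rfl | ⟨j, rfl⟩)
      · simp
      · simp
  rw [hset, Finset.sum_insert, Finset.sum_image]
  · have huniv : u (Finset.univ.piecewise m m') = u m := by
      congr 1
      exact Finset.piecewise_univ m m'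
    have hsingle : ∀ j : Fin k, u (({j}ᶜ : Finset (Fin k)).piecewise m m')
        = (-1 : ℝ) ^ ((j : ℕ) + 1) * u (v ∘ (j.succ : Fin (k+1)).succAbove) := by
      intro j
      have h1 : ({j}ᶜ : Finset (Fin k)).piecewise m m' = Function.update m j (-v 0) := by
        rw [Finset.piecewise_compl, Finset.piecewise_singleton]
      rw [h1]
      have h2 : u (Function.update m j (-v 0)) = - u (Function.update m j (v 0)) :=
        u.toMultilinearMap.map_update_neg m j (v 0)
      rw [h2, hm, single_term u v j]
      ring
    rw [huniv]
    rw [Finset.sum_congr rfl (fun j _ => hsingle j)]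
    rw [Fin.sum_univ_succ]
    have h00 : v ∘ (0 : Fin (k+1)).succAbove = m := by
      funext a
      simp [hm, Fin.succAbove_zero]
    rw [h00]
    simp only [Fin.val_zero, pow_zero, one_mul, Fin.val_succ]
  · intro a _ b _ hab
    have := congrArg (fun S : Finset (Fin k) => Sᶜ) hab
    simpa using this
  · intro hmem
    obtain ⟨j, -, hj⟩ := Finset.mem_image.mp hmem
    have : j ∈ ({j}ᶜ : Finset (Fin k)) := hj ▸ Finset.mem_univ j
    simp at this


-- continuity of the insertion maps
lemma continuous_ins_fixed (i : Fin (m+1)) (c : ℝ) : Continuous (fun s => ins i c s) := by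
  apply continuous_pi
  intro j
  refine Fin.succAboveCases i ?_ ?_ j
  · simp only [ins_same]; exact continuous_const
  · intro a; simp only [ins_succAbove]; exact continuous_apply a

lemma continuous_ins_slant (i : Fin (m+1)) :
    Continuous (fun s : Fin m → ℝ => ins i (1 - ∑ a, s a) s) := by
  apply continuous_pi
  intro j
  refine Fin.succAboveCases i ?_ ?_ j
  · simp only [ins_same]
    exact continuous_const.sub (continuous_finset_sum _ fun a _ => continuous_apply a)
  · intro a; simp only [ins_succAbove]; exact continuous_apply a

lemma ins_slant_mem_pic {i : Fin (m+1)} {s : Fin m → ℝ} (hs : s ∈ pic m) :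
    ins i (1 - ∑ a, s a) s ∈ pic (m+1) := by
  refine ins_mem_pic.mpr ⟨hs.1, by linarith [hs.2], by linarith⟩

lemma ins_zero_mem_pic {i : Fin (m+1)} {s : Fin m → ℝ} (hs : s ∈ pic m) :
    ins i 0 s ∈ pic (m+1) := by
  refine ins_mem_pic.mpr ⟨hs.1, le_refl 0, by linarith [hs.2]⟩

lemma ins_eq_affine (i : Fin (m+1)) (s : Fin m → ℝ) :
    (fun c : ℝ => ins i c s) = fun c => ins i 0 s + c • Pi.single i 1 := by
  funext c
  funext j
  refine Fin.succAboveCases i ?_ ?_ j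
  · simp
  · intro a
    have hne : i.succAbove a ≠ i := Fin.succAbove_ne i a
    simp [Pi.single_eq_of_ne hne]

/-- FTC + Fubini on the corner simplex in coordinate `i`. -/
lemma ftc_pic (G : (Fin (m+1) → ℝ) → ℝ) (V : Set (Fin (m+1) → ℝ))
    (hV : IsOpen V) (hpicV : pic (m+1) ⊆ V) (hG : ContDiffOn ℝ (⊤ : ℕ∞) G V) (i : Fin (m+1)) :
    (∫ t in pic (m+1), fderiv ℝ G t (Pi.single i 1)) =
      (∫ s in pic m, G (ins i (1 - ∑ a, s a) s)) - ∫ s in pic m, G (ins i 0 s) := by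
  classical
  set f : (Fin (m+1) → ℝ) → ℝ := fun t => fderiv ℝ G t (Pi.single i 1) with hf
  -- continuity of the derivative
  have hfc : ContinuousOn f V := by
    have h1 : ContinuousOn (fderiv ℝ G) V :=
      hG.continuousOn_fderiv_of_isOpen hV (by simp)
    exact h1.clm_apply continuousOn_const
  have hfint : IntegrableOn f (pic (m+1)) volume :=
    (hfc.mono hpicV).integrableOn_compact (isCompact_pic (m+1))
  -- pass to indicator and to the product space
  rw [← integral_indicator (measurableSet_pic (m+1))]
  set g : (Fin (m+1) → ℝ) → ℝ := (pic (m+1)).indicator f with hg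
  have hgint : Integrable g volume := by
    rw [hg, integrable_indicator_iff (measurableSet_pic (m+1))]
    exact hfint
  have hmp := MeasureTheory.volume_preserving_piFinSuccAbove (fun _ : Fin (m+1) => ℝ) i
  have hcomp := (hmp.symm).integral_comp
    (MeasurableEquiv.measurableEmbedding _) g
  rw [← hcomp]
  have hgint' : Integrable (fun p : ℝ × (Fin m → ℝ) =>
      g ((MeasurableEquiv.piFinSuccAbove (fun _ : Fin (m+1) => ℝ) i).symm p)) volume := by
    rw [← Function.comp_def]
    exact ((hmp.symm).integrable_comp_emb (MeasurableEquiv.measurableEmbedding _)).mpr hgint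
  have hsymm_apply : ∀ p : ℝ × (Fin m → ℝ),
      (MeasurableEquiv.piFinSuccAbove (fun _ : Fin (m+1) => ℝ) i).symm p = ins i p.1 p.2 := by
    intro p
    rfl
  have hps : (∫ p : ℝ × (Fin m → ℝ),
        g ((MeasurableEquiv.piFinSuccAbove (fun _ : Fin (m+1) => ℝ) i).symm p) ∂volume)
      = ∫ s : Fin m → ℝ, (∫ c : ℝ,
          g ((MeasurableEquiv.piFinSuccAbove (fun _ : Fin (m+1) => ℝ) i).symm (c, s))) :=
    MeasureTheory.integral_prod_symm _ hgint'
  rw [hps]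
  -- inner integral computation
  have hinner : ∀ s : Fin m → ℝ,
      (∫ c : ℝ, g ((MeasurableEquiv.piFinSuccAbove (fun _ : Fin (m+1) => ℝ) i).symm (c, s)))
        = (pic m).indicator (fun s => G (ins i (1 - ∑ a, s a) s) - G (ins i 0 s)) s := by
    intro s
    simp only [hsymm_apply]
    by_cases h0 : ∀ a, 0 ≤ s a
    · have hset : (fun c : ℝ => g (ins i c s))
          = (Set.Icc 0 (1 - ∑ a, s a)).indicator (fun c => f (ins i c s)) := by
        funext c
        rw [hg, Set.indicator_apply, Set.indicator_apply]
        congr 1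
        simp only [eq_iff_iff, ins_mem_pic, Set.mem_Icc]
        constructor
        · rintro ⟨-, h1, h2⟩; exact ⟨h1, by linarith⟩
        · rintro ⟨h1, h2⟩; exact ⟨h0, h1, by linarith⟩
      rw [hset, integral_indicator measurableSet_Icc]
      by_cases h1 : ∑ a, s a ≤ 1
      · have hb0 : (0:ℝ) ≤ 1 - ∑ a, s a := by linarith
        have hs_mem : s ∈ pic m := ⟨h0, h1⟩
        rw [integral_Icc_eq_integral_Ioc, ← intervalIntegral.integral_of_le hb0]
        have hderiv : ∀ c ∈ Set.uIcc (0:ℝ) (1 - ∑ a, s a),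
            HasDerivAt (fun c => G (ins i c s)) (f (ins i c s)) c := by
          intro c hc
          rw [Set.uIcc_of_le hb0, Set.mem_Icc] at hc
          have hmem : ins i c s ∈ pic (m+1) :=
            ins_mem_pic.mpr ⟨h0, hc.1, by linarith [hc.2]⟩
          have hγ : HasDerivAt (fun c : ℝ => ins i c s) (Pi.single i 1) c := by
            rw [ins_eq_affine i s]
            simpa using ((hasDerivAt_id c).smul_const (Pi.single (M := fun _ : Fin (m+1) => ℝ) i (1:ℝ))).const_add (ins i 0 s)
          have hdiff : DifferentiableAt ℝ G (ins i c s) :=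
            (hG.differentiableOn (by simp)).differentiableAt (hV.mem_nhds (hpicV hmem))
          exact (hdiff.hasFDerivAt).comp_hasDerivAt c hγ
        have hcurve : Continuous fun c : ℝ => ins i c s := by
          rw [ins_eq_affine i s]
          exact continuous_const.add (continuous_id.smul continuous_const)
        have hint : IntervalIntegrable (fun c => f (ins i c s)) volume 0 (1 - ∑ a, s a) := by
          apply ContinuousOn.intervalIntegrable
          apply ContinuousOn.comp (hfc.mono hpicV) hcurve.continuousOn
          intro c hc
          rw [Set.uIcc_of_le hb0, Set.mem_Icc] at hc
          exact ins_mem_pic.mpr ⟨h0, hc.1, by linarith [hc.2]⟩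
        rw [intervalIntegral.integral_eq_sub_of_hasDerivAt hderiv hint]
        rw [Set.indicator_of_mem hs_mem]
      · have hicc : Set.Icc (0:ℝ) (1 - ∑ a, s a) = ∅ := by
          apply Set.Icc_eq_empty
          intro hcon
          exact h1 (by linarith)
        rw [hicc]
        have hs_not : s ∉ pic m := fun hs => h1 hs.2
        rw [Set.indicator_of_notMem hs_not]
        simp
    · have hzero : ∀ c : ℝ, g (ins i c s) = 0 := by
        intro c
        rw [hg, Set.indicator_of_notMem]
        rw [ins_mem_pic]
        tauto
      simp only [hzero]
      have hs_not : s ∉ pic m := fun hs => h0 hs.1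
      rw [Set.indicator_of_notMem hs_not]
      simp
  rw [integral_congr_ae (Filter.Eventually.of_forall hinner)]
  -- outer integral
  rw [integral_indicator (measurableSet_pic m)]
  have hcont1 : ContinuousOn (fun s : Fin m → ℝ => G (ins i (1 - ∑ a, s a) s)) (pic m) := by
    apply (hG.continuousOn.mono (le_refl V)).comp (continuous_ins_slant i).continuousOn
    intro s hs
    exact hpicV (ins_slant_mem_pic hs)
  have hcont2 : ContinuousOn (fun s : Fin m → ℝ => G (ins i 0 s)) (pic m) := by
    apply (hG.continuousOn.mono (le_refl V)).comp (continuous_ins_fixed i 0).continuousOn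
    intro s hs
    exact hpicV (ins_zero_mem_pic hs)
  rw [integral_sub (hcont1.integrableOn_compact (isCompact_pic m))
    (hcont2.integrableOn_compact (isCompact_pic m))]


end StokesAux

namespace StokesAux

lemma eucl_symm_apply (m : ℕ) (t : Fin m → ℝ) (i : Fin m) :
    ((MeasurableEquiv.toLp 2 (Fin m → ℝ)) t) i = t i := rfl

lemma integral_corner_eq' (m : ℕ) (f : EuclideanSpace ℝ (Fin m) → ℝ)
    (g : (Fin m → ℝ) → ℝ)
    (hfg : ∀ t, f ((MeasurableEquiv.toLp 2 (Fin m → ℝ)) t) = g t) :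
    (∫ t in cornerSimplex m, f t) = ∫ t in pic m, g t := by
  rw [integral_corner_eq m f]
  exact setIntegral_congr_fun (measurableSet_pic m) fun t _ => hfg t

end StokesAux

open StokesAux in
/-- Stokes' theorem for a simplex: if `f = [x_0,…,x_{k+1}]` is a
`(k+1)`-dimensional oriented affine simplex in `ℝ^n` and `u` is a smooth `k`-form on a
neighborhood of `f`, then `∫_f du = ∑_{j=0}^{k+1} (-1)^j ∫_{f_j} tr_{f_j} u`, where
`f_j` is the facet obtained by deleting vertex `x_j`.  All integrals are computed
through the affine parametrizations of `f` and of its facets over the reference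
corner simplices, which encode the orientations (the facet `f_j` carries the induced
orientation up to the sign `(-1)^j`). -/
theorem stokes_simplex {n k : ℕ} (x : Fin (k + 2) → EuclideanSpace ℝ (Fin n))
    (u : EuclideanSpace ℝ (Fin n) → ((EuclideanSpace ℝ (Fin n)) [⋀^Fin k]→ₗ[ℝ] ℝ))
    (U : Set (EuclideanSpace ℝ (Fin n))) (hU : IsOpen U)
    (hfU : convexHull ℝ (Set.range x) ⊆ U)
    (hu : ∀ w : Fin k → EuclideanSpace ℝ (Fin n), ContDiffOn ℝ (⊤ : ℕ∞) (fun p => u p w) U) :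
    (∫ t in cornerSimplex (k + 1),
        extDerivEval (fun p w => u p w)
          (x 0 + ∑ i : Fin (k + 1), t i • (x i.succ - x 0))
          (fun i : Fin (k + 1) => x i.succ - x 0) ∂volume) =
      ∑ j : Fin (k + 2), (-1 : ℝ) ^ (j : ℕ) *
        ∫ s in cornerSimplex k,
          u (x (j.succAbove 0) +
              ∑ a : Fin k, s a • (x (j.succAbove a.succ) - x (j.succAbove 0)))
            (fun a : Fin k => x (j.succAbove a.succ) - x (j.succAbove 0)) ∂volume := by
    classical
  set v : Fin (k+1) → EuclideanSpace ℝ (Fin n) := fun i => x i.succ - x 0 with hv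
  set A : (Fin (k+1) → ℝ) → EuclideanSpace ℝ (Fin n) :=
    fun t => x 0 + ∑ j : Fin (k+1), t j • v j with hA
  set LA : (Fin (k+1) → ℝ) →L[ℝ] EuclideanSpace ℝ (Fin n) :=
    ∑ j : Fin (k+1), (ContinuousLinearMap.proj j).smulRight (v j) with hLA
  have hLA_apply : ∀ t, LA t = ∑ j : Fin (k+1), t j • v j := by
    intro t
    rw [hLA, ContinuousLinearMap.sum_apply]
    apply Finset.sum_congr rfl
    intro j _
    rfl
  have hLA_single : ∀ i : Fin (k+1), LA (Pi.single i 1) = v i := by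
    intro i
    rw [hLA_apply]
    rw [Finset.sum_eq_single i]
    · simp
    · intro b _ hb
      rw [Pi.single_eq_of_ne hb]
      simp
    · intro h
      exact absurd (Finset.mem_univ i) h
  have hAeq : A = fun t => x 0 + LA t := by
    funext t
    rw [hLA_apply]
  have hA_contDiff : ContDiff ℝ (⊤ : ℕ∞) A := by
    rw [hAeq]
    exact contDiff_const.add LA.contDiff
  have hA_cont : Continuous A := hA_contDiff.continuous
  set V : Set (Fin (k+1) → ℝ) := A ⁻¹' U with hVdef
  have hV : IsOpen V := hU.preimage hA_cont
  -- points of the corner simplex map into the convex hull of the vertices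
  have hpicV : pic (k+1) ⊆ V := by
    intro t ht
    apply hfU
    -- A t is a convex combination of the x j with weights w
    set w : Fin (k+2) → ℝ := ins (0 : Fin (k+2)) (1 - ∑ a, t a) t with hw
    have hw0 : ∀ j, 0 ≤ w j := by
      rw [Fin.forall_iff_succAbove (0 : Fin (k+2))]
      constructor
      · rw [hw]; simp only [ins_same]; linarith [ht.2]
      · intro a
        rw [hw]; simp only [ins_succAbove]
        have : (0 : Fin (k+2)).succAbove a = a.succ := by
          rw [Fin.succAbove_zero]
        exact ht.1 a
    have hw1 : ∑ j, w j = 1 := by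
      rw [hw, sum_ins]; ring
    have hpt : A t = ∑ j, w j • x j := by
      rw [Fin.sum_univ_succ]
      have hws : ∀ a : Fin (k+1), w a.succ = t a := fun a => zero_ins_succ _ _ a
      have hw00 : w 0 = 1 - ∑ a, t a := ins_same _ _ _
      simp only [hws, hw00]
      rw [hA]
      simp only [hv]
      rw [sub_smul, one_smul]
      have hsplit : ∑ a : Fin (k+1), t a • (x a.succ - x 0)
          = (∑ a : Fin (k+1), t a • x a.succ) - (∑ a : Fin (k+1), t a) • x 0 := by
        rw [Finset.sum_smul]
        rw [← Finset.sum_sub_distrib]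
        apply Finset.sum_congr rfl
        intro a _
        rw [smul_sub]
      rw [hsplit]
      abel
    rw [hpt]
    have := Finset.centerMass_mem_convexHull (Finset.univ : Finset (Fin (k+2)))
      (fun j _ => hw0 j) (by rw [hw1]; norm_num)
      (fun j _ => Set.mem_range_self (f := x) j)
    rwa [Finset.centerMass_eq_of_sum_1 _ _ hw1] at this
  set G : Fin (k+1) → (Fin (k+1) → ℝ) → ℝ := fun i t => u (A t) (v ∘ i.succAbove) with hG
  have hGsmooth : ∀ i, ContDiffOn ℝ (⊤ : ℕ∞) (G i) V := by
    intro i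
    exact ContDiffOn.comp (hu (v ∘ i.succAbove)) hA_contDiff.contDiffOn
      (fun t ht => ht)
  have hGcont : ∀ i, ContinuousOn (G i) V := fun i => (hGsmooth i).continuousOn
  -- rewrite the left-hand side
  rw [integral_corner_eq' (k+1) _
    (fun t => extDerivEval (fun p w => u p w) (A t) v) (fun t => rfl)]
  have hintegrand : Set.EqOn
      (fun t => extDerivEval (fun p w => u p w) (A t) v)
      (fun t => ∑ i : Fin (k+1), (-1:ℝ)^(i:ℕ) * fderiv ℝ (G i) t (Pi.single i 1))
      (pic (k+1)) := by
    intro t ht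
    unfold extDerivEval
    apply Finset.sum_congr rfl
    intro i _
    congr 1
    have hAt : HasFDerivAt A LA t := by
      rw [hAeq]
      exact LA.hasFDerivAt.const_add (x 0)
    have hdiffu : DifferentiableAt ℝ (fun y => u y (v ∘ i.succAbove)) (A t) :=
      ((hu (v ∘ i.succAbove)).differentiableOn (by simp)).differentiableAt
        (hU.mem_nhds (hpicV ht))
    have hcomp : HasFDerivAt (G i)
        ((fderiv ℝ (fun y => u y (v ∘ i.succAbove)) (A t)).comp LA) t :=
      (hdiffu.hasFDerivAt).comp t hAt
    rw [hcomp.fderiv, ContinuousLinearMap.comp_apply, hLA_single]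
  rw [setIntegral_congr_fun (measurableSet_pic (k+1)) hintegrand]
  have hterm_int : ∀ i : Fin (k+1),
      IntegrableOn (fun t => (-1:ℝ)^(i:ℕ) * fderiv ℝ (G i) t (Pi.single i 1))
        (pic (k+1)) volume := by
    intro i
    apply Integrable.const_mul
    have hc : ContinuousOn (fun t => fderiv ℝ (G i) t (Pi.single i 1)) V :=
      ((hGsmooth i).continuousOn_fderiv_of_isOpen hV (by simp)).clm_apply continuousOn_const
    exact (hc.mono hpicV).integrableOn_compact (isCompact_pic (k+1))
  rw [MeasureTheory.integral_finset_sum Finset.univ (fun i _ => hterm_int i)]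
  have hLHS : ∀ i : Fin (k+1),
      (∫ t in pic (k+1), (-1:ℝ)^(i:ℕ) * fderiv ℝ (G i) t (Pi.single i 1))
        = (-1:ℝ)^(i:ℕ) *
          ((∫ s in pic k, G i (ins i (1 - ∑ a, s a) s)) - ∫ s in pic k, G i (ins i 0 s)) := by
    intro i
    rw [MeasureTheory.integral_const_mul]
    rw [ftc_pic (G i) V hV hpicV (hGsmooth i) i]
  rw [Finset.sum_congr rfl (fun i _ => hLHS i)]
  -- now handle the right-hand side
  conv_rhs => rw [Fin.sum_univ_succ]
  -- facet j = i.succ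
  have hfacet_succ : ∀ i : Fin (k+1),
      (∫ s in cornerSimplex k,
          u (x ((i.succ).succAbove 0) +
              ∑ a : Fin k, s a • (x ((i.succ).succAbove a.succ) - x ((i.succ).succAbove 0)))
            (fun a : Fin k => x ((i.succ).succAbove a.succ) - x ((i.succ).succAbove 0)) ∂volume)
        = ∫ s in pic k, G i (ins i 0 s) := by
    intro i
    apply integral_corner_eq'
    intro s
    have h00 : (i.succ).succAbove 0 = 0 := Fin.succ_succAbove_zero i
    have hsucc : ∀ a : Fin k, (i.succ).succAbove a.succ = (i.succAbove a).succ :=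
      fun a => Fin.succ_succAbove_succ i a
    have hpoint : A (ins i 0 s) = x 0 + ∑ a : Fin k, s a • v (i.succAbove a) := by
      rw [hA]
      simp only []
      congr 1
      rw [Fin.sum_univ_succAbove _ i]
      simp only [ins_same, ins_succAbove, zero_smul, zero_add]
    simp only [eucl_symm_apply, h00, hsucc, hG, hpoint]
    rfl
  simp only [hfacet_succ]
  -- facet j = 0
  have hsA0 : ∀ b : Fin (k+1), (0 : Fin (k+2)).succAbove b = b.succ := by
    intro b
    rw [Fin.succAbove_zero]
  have hfacet_zero :
      (∫ s in cornerSimplex k,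
          u (x ((0 : Fin (k+2)).succAbove 0) +
              ∑ a : Fin k, s a • (x ((0 : Fin (k+2)).succAbove a.succ) - x ((0 : Fin (k+2)).succAbove 0)))
            (fun a : Fin k => x ((0 : Fin (k+2)).succAbove a.succ) - x ((0 : Fin (k+2)).succAbove 0)) ∂volume)
        = ∫ s in pic k,
            ∑ j : Fin (k+1), (-1:ℝ)^(j:ℕ) * G j (ins (0 : Fin (k+1)) (1 - ∑ a, s a) s) := by
    apply integral_corner_eq'
    intro s
    have hvec : (fun a : Fin k => x ((0 : Fin (k+2)).succAbove a.succ) - x ((0 : Fin (k+2)).succAbove 0))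
        = fun a : Fin k => v a.succ - v 0 := by
      funext a
      rw [hsA0, hsA0]
      simp only [hv]
      abel
    have hpoint0 : x ((0 : Fin (k+2)).succAbove 0) +
        ∑ a : Fin k, ((MeasurableEquiv.toLp 2 (Fin k → ℝ)) s) a •
          (x ((0 : Fin (k+2)).succAbove a.succ) - x ((0 : Fin (k+2)).succAbove 0))
        = A (ins (0 : Fin (k+1)) (1 - ∑ a, s a) s) := by
      simp only [eucl_symm_apply, hsA0]
      rw [hA]
      simp only []
      rw [Fin.sum_univ_succ]
      have hc0 : ins (0 : Fin (k+1)) (1 - ∑ a, s a) s 0 = 1 - ∑ a, s a := ins_same _ _ _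
      have hcs : ∀ a : Fin k, ins (0 : Fin (k+1)) (1 - ∑ a, s a) s a.succ = s a :=
        fun a => zero_ins_succ _ _ a
      simp only [hc0, hcs]
      have hxsucc : ∀ a : Fin k, x a.succ.succ - x (0 : Fin (k+1)).succ = v a.succ - v 0 := by
        intro a
        simp only [hv]
        abel
      simp only [hxsucc]
      have hexp : ∑ a : Fin k, s a • (v a.succ - v 0)
          = (∑ a : Fin k, s a • v a.succ) - (∑ a : Fin k, s a) • v 0 := by
        rw [Finset.sum_smul, ← Finset.sum_sub_distrib]
        apply Finset.sum_congr rfl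
        intro a _
        rw [smul_sub]
      rw [hexp, sub_smul, one_smul]
      have hx1 : x (0 : Fin (k+1)).succ = x 0 + v 0 := by
        simp only [hv]
        abel
      rw [hx1]
      abel
    rw [hpoint0]
    have := alt_expand (u (A (ins (0 : Fin (k+1)) (1 - ∑ a, s a) s))) v
    rw [show (fun a : Fin k => x ((0 : Fin (k+2)).succAbove a.succ) - x ((0 : Fin (k+2)).succAbove 0))
      = fun a : Fin k => v a.succ - v 0 from hvec]
    rw [this]
  rw [hfacet_zero]
  -- swap sum and integral in the 0-facet term
  have hint0 : ∀ j : Fin (k+1),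
      IntegrableOn (fun s => (-1:ℝ)^(j:ℕ) * G j (ins (0 : Fin (k+1)) (1 - ∑ a, s a) s))
        (pic k) volume := by
    intro j
    apply Integrable.const_mul
    have hcont : ContinuousOn (fun s : Fin k → ℝ => G j (ins (0 : Fin (k+1)) (1 - ∑ a, s a) s)) (pic k) := by
      apply ContinuousOn.comp (hGcont j) (continuous_ins_slant (0 : Fin (k+1))).continuousOn
      intro s hs
      exact hpicV (ins_slant_mem_pic hs)
    exact hcont.integrableOn_compact (isCompact_pic k)
  rw [MeasureTheory.integral_finset_sum Finset.univ (fun j _ => hint0 j)]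
  have hA_j : ∀ j : Fin (k+1),
      (∫ s in pic k, (-1:ℝ)^(j:ℕ) * G j (ins (0 : Fin (k+1)) (1 - ∑ a, s a) s))
        = (-1:ℝ)^(j:ℕ) * ∫ s in pic k, G j (ins j (1 - ∑ a, s a) s) := by
    intro j
    rw [MeasureTheory.integral_const_mul, slant_change j (G j)]
  rw [Finset.sum_congr rfl (fun j _ => hA_j j)]
  -- final algebra
  set C : Fin (k+1) → ℝ := fun j => ∫ s in pic k, G j (ins j (1 - ∑ a, s a) s) with hC
  set B : Fin (k+1) → ℝ := fun j => ∫ s in pic k, G j (ins j 0 s) with hB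
  simp only [Fin.val_zero, pow_zero, one_mul, Fin.val_succ, pow_succ, mul_sub]
  rw [Finset.sum_sub_distrib]
  have halg : ∀ i : Fin (k+1), (-1:ℝ)^(i:ℕ) * (-1) * B i = -((-1:ℝ)^(i:ℕ) * B i) :=
    fun i => by ring
  simp only [mul_neg_one, neg_mul]
  rw [Finset.sum_neg_distrib]
  ring
end

section
/- Let (V_•, d) be a cochain complex of finite-dimensional inner product spaces that is exact at level k−1 and level k. Then for each u ∈ V_k there exists a unique pair (σ, w) ∈ V_{k-1} × V_k solving the discrete Hodge-Laplace-type system: ⟨σ, τ⟩ − ⟨w, dτ⟩ = 0 for all τ ∈ V_{k-1}, and ⟨dσ, v⟩ + ⟨dw, dv⟩ = ⟨du, dv⟩ for all v ∈ V_k; moreover σ = 0 in this solution. -/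
open scoped RealInnerProductSpace

/-!
Testing the second equation with `v = d₁σ` gives `‖d₁σ‖² = 0` because `d₂ d₁ = 0`, and then
testing the first with `τ = σ` gives `σ = 0`. For `σ = 0` the first equation says
`w ⊥ range d₁ = ker d₂` and the second says `d₂ w = d₂ u`, i.e. `u - w ∈ ker d₂`; so `w` must be
the orthogonal projection of `u` onto `(ker d₂)ᗮ`, which exists since `V_k` is finite
dimensional.
-/

theorem Submodule.eq_starProjection_orthogonal_iff {E : Type*} [NormedAddCommGroup E]
    [InnerProductSpace ℝ E] (K : Submodule ℝ E) [K.HasOrthogonalProjection] {u w : E} :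
    w = Kᗮ.starProjection u ↔ w ∈ Kᗮ ∧ u - w ∈ K := by
  constructor
  · rintro rfl
    refine ⟨Kᗮ.starProjection_apply_mem u, ?_⟩
    simpa only [K.orthogonal_orthogonal] using Kᗮ.sub_starProjection_mem_orthogonal u
  · rintro ⟨hw, huw⟩
    exact (Kᗮ.eq_starProjection_of_mem_orthogonal hw (by rwa [K.orthogonal_orthogonal])).symm

theorem LinearMap.forall_inner_map_eq_iff {F G : Type*} [NormedAddCommGroup F]
    [InnerProductSpace ℝ F] [NormedAddCommGroup G] [InnerProductSpace ℝ G]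
    (d : F →ₗ[ℝ] G) {x y : F} : (∀ v, ⟪d x, d v⟫ = ⟪d y, d v⟫) ↔ d x = d y := by
  refine ⟨fun h => ?_, fun h v => by rw [h]⟩
  have hself : ⟪d x - d y, d x - d y⟫ = 0 := by
    rw [inner_sub_left, ← map_sub, h, sub_self]
  exact sub_eq_zero.1 (inner_self_eq_zero.1 hself)

section HodgeSystem

variable {E F G : Type*}
  [NormedAddCommGroup E] [InnerProductSpace ℝ E]
  [NormedAddCommGroup F] [InnerProductSpace ℝ F]
  [NormedAddCommGroup G] [InnerProductSpace ℝ G]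
  (d₁ : E →ₗ[ℝ] F) (d₂ : F →ₗ[ℝ] G) (u : F)

def IsHodgeSolution (p : E × F) : Prop :=
  (∀ τ : E, ⟪p.1, τ⟫ - ⟪p.2, d₁ τ⟫ = 0) ∧
    ∀ v : F, ⟪d₁ p.1, v⟫ + ⟪d₂ p.2, d₂ v⟫ = ⟪d₂ u, d₂ v⟫

variable {d₁ d₂ u}

theorem IsHodgeSolution.fst_eq_zero (hc : d₂ ∘ₗ d₁ = 0) {p : E × F}
    (h : IsHodgeSolution d₁ d₂ u p) : p.1 = 0 := by
  have hd₂d₁ : d₂ (d₁ p.1) = 0 := LinearMap.congr_fun hc p.1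
  have hd₁ : d₁ p.1 = 0 := by simpa [hd₂d₁] using h.2 (d₁ p.1)
  simpa [hd₁] using h.1 p.1

theorem isHodgeSolution_zero_iff {w : F} :
    IsHodgeSolution d₁ d₂ u (0, w) ↔ w ∈ (LinearMap.range d₁)ᗮ ∧ d₂ w = d₂ u := by
  simp only [IsHodgeSolution, inner_zero_left, map_zero, zero_sub, neg_eq_zero, zero_add]
  exact and_congr (by simp [Submodule.mem_orthogonal']) d₂.forall_inner_map_eq_iff

theorem isHodgeSolution_iff_eq_starProjection [FiniteDimensional ℝ F]
    (hexact : LinearMap.ker d₂ = LinearMap.range d₁) {p : E × F} :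
    IsHodgeSolution d₁ d₂ u p ↔ p = (0, (LinearMap.ker d₂)ᗮ.starProjection u) := by
  obtain ⟨σ, w⟩ := p
  have hc : d₂ ∘ₗ d₁ = 0 := LinearMap.range_le_ker_iff.1 hexact.ge
  rw [Prod.mk.injEq, Submodule.eq_starProjection_orthogonal_iff, LinearMap.mem_ker, map_sub,
    sub_eq_zero, eq_comm (a := d₂ u), hexact]
  constructor
  · intro h
    obtain rfl : σ = 0 := h.fst_eq_zero hc
    exact ⟨rfl, isHodgeSolution_zero_iff.1 h⟩
  · rintro ⟨rfl, hw⟩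
    exact isHodgeSolution_zero_iff.2 hw

end HodgeSystem

theorem hodge_laplace_system_wellposed_general
    {U1 U2 U3 : Type*}
    [NormedAddCommGroup U1] [InnerProductSpace ℝ U1]
    [NormedAddCommGroup U2] [InnerProductSpace ℝ U2] [FiniteDimensional ℝ U2]
    [NormedAddCommGroup U3] [InnerProductSpace ℝ U3]
    (d₁ : U1 →ₗ[ℝ] U2) (d₂ : U2 →ₗ[ℝ] U3)
    (hexact2 : LinearMap.ker d₂ = LinearMap.range d₁)
    (u : U2) :
    (∃! p : U1 × U2,
        (∀ τ : U1, ⟪p.1, τ⟫ - ⟪p.2, d₁ τ⟫ = 0) ∧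
        (∀ v : U2, ⟪d₁ p.1, v⟫ + ⟪d₂ p.2, d₂ v⟫ = ⟪d₂ u, d₂ v⟫)) ∧
    (∀ p : U1 × U2,
        ((∀ τ : U1, ⟪p.1, τ⟫ - ⟪p.2, d₁ τ⟫ = 0) ∧
         (∀ v : U2, ⟪d₁ p.1, v⟫ + ⟪d₂ p.2, d₂ v⟫ = ⟪d₂ u, d₂ v⟫)) → p.1 = 0) := by
  have hsol (p : U1 × U2) := isHodgeSolution_iff_eq_starProjection (u := u) hexact2 (p := p)
  refine ⟨⟨_, (hsol _).2 rfl, fun p hp => (hsol p).1 hp⟩, fun p hp => ?_⟩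
  rw [(hsol p).1 hp]

/-- Let `V_{k-2} →^{d₀} V_{k-1} →^{d₁} V_k →^{d₂} V_{k+1}` be a cochain
complex of finite-dimensional real inner product spaces, exact at level `k-1`
(`ker d₁ = range d₀`) and at level `k` (`ker d₂ = range d₁`).  Then for each `u ∈ V_k`
there is a unique pair `(σ, w) ∈ V_{k-1} × V_k` solving the discrete
Hodge-Laplace-type system
`⟨σ, τ⟩ − ⟨w, d₁τ⟩ = 0` for all `τ ∈ V_{k-1}`, and
`⟨d₁σ, v⟩ + ⟨d₂w, d₂v⟩ = ⟨d₂u, d₂v⟩` for all `v ∈ V_k`;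
moreover `σ = 0` in this solution. -/
theorem hodge_laplace_system_wellposed
    {U0 U1 U2 U3 : Type*}
    [NormedAddCommGroup U0] [InnerProductSpace ℝ U0] [FiniteDimensional ℝ U0]
    [NormedAddCommGroup U1] [InnerProductSpace ℝ U1] [FiniteDimensional ℝ U1]
    [NormedAddCommGroup U2] [InnerProductSpace ℝ U2] [FiniteDimensional ℝ U2]
    [NormedAddCommGroup U3] [InnerProductSpace ℝ U3] [FiniteDimensional ℝ U3]
    (d₀ : U0 →ₗ[ℝ] U1) (d₁ : U1 →ₗ[ℝ] U2) (d₂ : U2 →ₗ[ℝ] U3)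
    (hc1 : d₁.comp d₀ = 0) (hc2 : d₂.comp d₁ = 0)
    (hexact1 : LinearMap.ker d₁ = LinearMap.range d₀)
    (hexact2 : LinearMap.ker d₂ = LinearMap.range d₁)
    (u : U2) :
    (∃! p : U1 × U2,
        (∀ τ : U1, ⟪p.1, τ⟫ - ⟪p.2, d₁ τ⟫ = 0) ∧
        (∀ v : U2, ⟪d₁ p.1, v⟫ + ⟪d₂ p.2, d₂ v⟫ = ⟪d₂ u, d₂ v⟫)) ∧
    (∀ p : U1 × U2,
        ((∀ τ : U1, ⟪p.1, τ⟫ - ⟪p.2, d₁ τ⟫ = 0) ∧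
         (∀ v : U2, ⟪d₁ p.1, v⟫ + ⟪d₂ p.2, d₂ v⟫ = ⟪d₂ u, d₂ v⟫)) → p.1 = 0) :=
  hodge_laplace_system_wellposed_general d₁ d₂ hexact2 u
end

section
/- Let (V_•, d) be a cochain complex of finite-dimensional inner product spaces with V_{-1} = 0, and suppose for each k the quantities ⟨Q u, dτ⟩ = ⟨u, dτ⟩ (τ ∈ V_{k-1}') and ⟨dQu, dv⟩ = ⟨du, dv⟩ (v ∈ V_k') define a map Q^k : V_k → V_k' onto a subcomplex (V_•', d) that is exact. Then Q^k ∘ d = d ∘ Q^{k-1}, i.e., the maps Q^k commute with the differential. -/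
open scoped RealInnerProductSpace

/-- Let `Z →^{d₀} A →^{d₁} B →^{d₂} C` be a cochain complex of
finite-dimensional real inner product spaces, with subspaces `Z' ⊆ Z`, `A' ⊆ A`,
`B' ⊆ B` forming a subcomplex (`d₀ Z' ⊆ A'`, `d₁ A' ⊆ B'`) which is exact at `B'`
(every `w ∈ B'` with `d₂ w = 0` is `d₁ τ` for some `τ ∈ A'`).  Suppose
`Q₁ : A → A'` and `Q₂ : B → B'` are defined by the variational conditions
`⟨Q u, dτ⟩ = ⟨u, dτ⟩` (test functions in the subcomplex one level down) and
`⟨dQu, dv⟩ = ⟨du, dv⟩` (test functions in the subcomplex at the same level).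
Then the maps `Q` commute with the differential: `Q₂ ∘ d₁ = d₁ ∘ Q₁`. -/
theorem Q_commutes_with_d
    {Z A B C : Type*}
    [NormedAddCommGroup Z] [InnerProductSpace ℝ Z] [FiniteDimensional ℝ Z]
    [NormedAddCommGroup A] [InnerProductSpace ℝ A] [FiniteDimensional ℝ A]
    [NormedAddCommGroup B] [InnerProductSpace ℝ B] [FiniteDimensional ℝ B]
    [NormedAddCommGroup C] [InnerProductSpace ℝ C] [FiniteDimensional ℝ C]
    (d₀ : Z →ₗ[ℝ] A) (d₁ : A →ₗ[ℝ] B) (d₂ : B →ₗ[ℝ] C)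
    (hc1 : d₁.comp d₀ = 0) (hc2 : d₂.comp d₁ = 0)
    (Z' : Submodule ℝ Z) (A' : Submodule ℝ A) (B' : Submodule ℝ B)
    (hsub0 : ∀ τ ∈ Z', d₀ τ ∈ A') (hsub1 : ∀ v ∈ A', d₁ v ∈ B')
    (hexactB' : ∀ w ∈ B', d₂ w = 0 → ∃ τ ∈ A', d₁ τ = w)
    (Q₁ : A → A) (Q₂ : B → B)
    (hQ₁mem : ∀ u, Q₁ u ∈ A')
    (hQ₁a : ∀ u : A, ∀ τ ∈ Z', ⟪Q₁ u, d₀ τ⟫ = ⟪u, d₀ τ⟫)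
    (hQ₁b : ∀ u : A, ∀ v ∈ A', ⟪d₁ (Q₁ u), d₁ v⟫ = ⟪d₁ u, d₁ v⟫)
    (hQ₂mem : ∀ u, Q₂ u ∈ B')
    (hQ₂a : ∀ u : B, ∀ τ ∈ A', ⟪Q₂ u, d₁ τ⟫ = ⟪u, d₁ τ⟫)
    (hQ₂b : ∀ u : B, ∀ v ∈ B', ⟪d₂ (Q₂ u), d₂ v⟫ = ⟪d₂ u, d₂ v⟫) :
    ∀ u : A, Q₂ (d₁ u) = d₁ (Q₁ u) := by
  intro u
  set w : B := Q₂ (d₁ u) - d₁ (Q₁ u) with hw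
  have hwB' : w ∈ B' := by
    exact Submodule.sub_mem _ (hQ₂mem (d₁ u)) (hsub1 _ (hQ₁mem u))
  have hd2Q : d₂ (Q₂ (d₁ u)) = 0 := by
    have h := hQ₂b (d₁ u) (Q₂ (d₁ u)) (hQ₂mem (d₁ u))
    have hdd : d₂ (d₁ u) = 0 := by
      have := congrArg (fun f => f u) hc2
      simpa using this
    rw [hdd] at h
    simp only [inner_zero_left] at h
    exact inner_self_eq_zero.mp h
  have hd2w : d₂ w = 0 := by
    have hdd : d₂ (d₁ (Q₁ u)) = 0 := by
      have := congrArg (fun f => f (Q₁ u)) hc2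
      simpa using this
    rw [hw, map_sub, hd2Q, hdd, sub_zero]
  obtain ⟨τ, hτ, hdτ⟩ := hexactB' w hwB' hd2w
  have hww : ⟪w, w⟫ = 0 := by
    nth_rewrite 2 [← hdτ]
    rw [hw, inner_sub_left, hQ₂a (d₁ u) τ hτ, hQ₁b u τ hτ, sub_self]
  have : w = 0 := inner_self_eq_zero.mp hww
  have := sub_eq_zero.mp this
  exact this
end
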